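/- For every real α ≥ 1 one has Γ(α+1)·(2/j_{α+1})^α·J_α(j_{α+1}) ≥ Γ(α)·(2/j_α)^{α−1}·J_{α−1}(j_α); that is, writing Ω_α(t) = Γ(α+1)·(2/t)^α·J_α(t) for t > 0, the global minimum of Ω_α, which is attained at t = j_{α+1}, is at least the global minimum of Ω_{α−1}, which is attained at t = j_α. -/

import Mathlib

/-!
With `H_ν(x) = ∑ₘ (-1)ᵐ xᵐ / (m! Γ(m+ν+1))` one has `J_ν(t) = (t/2)^ν H_ν(t²/4)`, so
`Ω_ν(t) = Γ(ν+1) H_ν(t²/4)`, and `a = j_α²/4`, `b = j_{α+1}²/4` are the first positive zeros of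
`H_α` and `H_{α+1}`. Termwise, `H_ν' = -H_{ν+1}` and `(x^{ν+1} H_{ν+1})' = x^ν H_ν`. By Rolle, the
second identity forces `a ≤ b`; by the first, `H_α` decreases on `[0, b]`, so `H_α ≤ 0` on `[a, b]`
and `H_{α-1}` increases there. Finally the recurrence `H_{α-1} = α H_α - x H_{α+1}` at the zero `b`
of `H_{α+1}` gives `Γ(α) H_{α-1}(b) = Γ(α+1) H_α(b)`.
-/

/-- The Bessel function of the first kind of order `ν`,
`J_ν(t) = Σ_{m=0}^∞ (-1)^m / (m!·Γ(m+ν+1)) · (t/2)^{2m+ν}` (for `t > 0`,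
using real powers). -/
noncomputable def besselJ (ν : ℝ) (t : ℝ) : ℝ :=
  ∑' m : ℕ, ((-1 : ℝ) ^ m / ((Nat.factorial m) * Real.Gamma ((m : ℝ) + ν + 1))) *
    (t / 2) ^ (2 * (m : ℝ) + ν)

open Real Set
open scoped Nat

namespace Bessel

noncomputable def besselCoeff (ν : ℝ) (m : ℕ) : ℝ :=
  (-1 : ℝ) ^ m / (m ! * Gamma (m + ν + 1))

noncomputable def besselH (ν x : ℝ) : ℝ :=
  ∑' m : ℕ, besselCoeff ν m * x ^ m

section Coefficients

variable {ν : ℝ}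

theorem factorial_mul_Gamma_le (hν : 0 ≤ ν) (m : ℕ) :
    m ! * Gamma (ν + 1) ≤ Gamma (m + ν + 1) := by
  induction m with
  | zero => simp
  | succ n ih =>
    have hΓ : Gamma ((n + 1 : ℕ) + ν + 1) = (n + ν + 1) * Gamma (n + ν + 1) := by
      rw [← Gamma_add_one (by positivity)]
      push_cast
      ring_nf
    rw [Nat.factorial_succ, Nat.cast_mul, hΓ, mul_assoc]
    gcongr
    push_cast
    linarith

theorem abs_besselCoeff_le (hν : 0 ≤ ν) (m : ℕ) :
    |besselCoeff ν m| ≤ (Gamma (ν + 1))⁻¹ / m ! := by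
  have hfact : (1 : ℝ) ≤ m ! := by exact_mod_cast m.factorial_pos
  rw [besselCoeff, abs_div, abs_pow, abs_neg, abs_one, one_pow, abs_of_pos (by positivity),
    inv_div_left, one_div]
  refine inv_anti₀ (by positivity) ?_
  calc (m ! : ℝ) * Gamma (ν + 1) ≤ Gamma (m + ν + 1) := factorial_mul_Gamma_le hν m
    _ ≤ m ! * Gamma (m + ν + 1) := le_mul_of_one_le_left (by positivity) hfact

theorem besselCoeff_eq_mul (ν : ℝ) (m : ℕ) :
    besselCoeff ν m = (m + ν + 1) * besselCoeff (ν + 1) m := by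
  rw [besselCoeff, besselCoeff, show (m : ℝ) + (ν + 1) + 1 = m + ν + 1 + 1 by ring]
  rcases eq_or_ne ((m : ℝ) + ν + 1) 0 with h | h
  · simp [h]
  · rw [Gamma_add_one h, mul_div_assoc', mul_left_comm (m ! : ℝ), mul_div_mul_left _ _ h]

theorem besselCoeff_succ_mul (ν : ℝ) (m : ℕ) :
    besselCoeff ν (m + 1) * (m + 1) = -besselCoeff (ν + 1) m := by
  have hm : (m : ℝ) + 1 ≠ 0 := by positivity
  rw [besselCoeff, besselCoeff, show ((m + 1 : ℕ) : ℝ) + ν + 1 = m + (ν + 1) + 1 by push_cast; ring,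
    Nat.factorial_succ, pow_succ, Nat.cast_mul, Nat.cast_succ, mul_assoc, div_mul_eq_mul_div,
    mul_comm _ ((m : ℝ) + 1), mul_div_mul_left _ _ hm]
  ring

end Coefficients

section Series

variable {ν : ℝ}

theorem summable_norm_besselCoeff_mul_pow (hν : 0 ≤ ν) (x : ℝ) :
    Summable fun m ↦ ‖besselCoeff ν m * x ^ m‖ := by
  refine .of_nonneg_of_le (fun _ ↦ norm_nonneg _) (fun m ↦ ?_)
    ((summable_pow_div_factorial ‖x‖).mul_left (Gamma (ν + 1))⁻¹)
  rw [norm_mul, norm_pow, Real.norm_eq_abs, ← mul_comm_div]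
  gcongr
  exact abs_besselCoeff_le hν m

theorem summable_besselCoeff_mul_pow (hν : 0 ≤ ν) (x : ℝ) :
    Summable fun m ↦ besselCoeff ν m * x ^ m :=
  (summable_norm_besselCoeff_mul_pow hν x).of_norm

theorem besselCoeff_mul_deriv_pow_succ (ν x : ℝ) (m : ℕ) :
    besselCoeff ν (m + 1) * ((m + 1 : ℕ) * x ^ (m + 1 - 1)) = -(besselCoeff (ν + 1) m * x ^ m) := by
  rw [Nat.add_sub_cancel, Nat.cast_succ, ← mul_assoc, besselCoeff_succ_mul, neg_mul]

theorem hasSum_besselCoeff_mul_deriv_pow (hν : 0 ≤ ν) (x : ℝ) :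
    HasSum (fun m ↦ besselCoeff ν m * (m * x ^ (m - 1))) (-besselH (ν + 1) x) := by
  rw [← hasSum_nat_add_iff' 1]
  simp only [Finset.range_one, Finset.sum_singleton, Nat.cast_zero, zero_mul, mul_zero, sub_zero,
    besselCoeff_mul_deriv_pow_succ]
  exact (summable_besselCoeff_mul_pow (by linarith) x).hasSum.neg

theorem summable_norm_besselCoeff_mul_deriv_pow (hν : 0 ≤ ν) (x : ℝ) :
    Summable fun m ↦ ‖besselCoeff ν m * (m * x ^ (m - 1))‖ := by
  rw [← summable_nat_add_iff 1]
  simpa only [besselCoeff_mul_deriv_pow_succ, norm_neg] using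
    summable_norm_besselCoeff_mul_pow (ν := ν + 1) (by linarith) x

theorem hasDerivAt_besselH (hν : 0 ≤ ν) (x : ℝ) :
    HasDerivAt (besselH ν) (-besselH (ν + 1) x) x := by
  set R := |x| + 1
  have hx : x ∈ Ioo (-R) R := abs_lt.mp (lt_add_one _)
  have hbound : ∀ (m : ℕ), ∀ y ∈ Ioo (-R) R,
      ‖besselCoeff ν m * (m * y ^ (m - 1))‖ ≤ ‖besselCoeff ν m * (m * R ^ (m - 1))‖ := by
    intro m y hy
    simp only [norm_mul, norm_pow]
    gcongr
    exact (abs_lt.mpr hy).le.trans (le_abs_self R)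
  rw [← (hasSum_besselCoeff_mul_deriv_pow hν x).tsum_eq]
  exact hasDerivAt_tsum_of_isPreconnected (summable_norm_besselCoeff_mul_deriv_pow hν R) isOpen_Ioo
    isPreconnected_Ioo (fun m y _ ↦ (hasDerivAt_pow m y).const_mul _) hbound hx
    (summable_besselCoeff_mul_pow hν x) hx

theorem continuous_besselH (hν : 0 ≤ ν) : Continuous (besselH ν) :=
  continuous_iff_continuousAt.2 fun x ↦ (hasDerivAt_besselH hν x).continuousAt

theorem besselH_zero (ν : ℝ) : besselH ν 0 = (Gamma (ν + 1))⁻¹ := by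
  rw [besselH, tsum_eq_single 0 fun m hm ↦ by simp [hm]]
  simp [besselCoeff]

theorem besselH_eq_sub (hν : 0 ≤ ν) (x : ℝ) :
    besselH ν x = (ν + 1) * besselH (ν + 1) x - x * besselH (ν + 2) x := by
  have hterm : ∀ m : ℕ, besselCoeff ν m * x ^ m = (ν + 1) * (besselCoeff (ν + 1) m * x ^ m) +
      x * (besselCoeff (ν + 1) m * (m * x ^ (m - 1))) := by
    intro m
    rw [besselCoeff_eq_mul]
    rcases m with _ | m
    · simp
    · simp only [Nat.add_sub_cancel, pow_succ]
      push_cast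
      ring
  have h := ((summable_besselCoeff_mul_pow (ν := ν + 1) (by linarith) x).hasSum.mul_left
    (ν + 1)).add ((hasSum_besselCoeff_mul_deriv_pow (ν := ν + 1) (by linarith) x).mul_left x)
  rw [show ν + 1 + 1 = ν + 2 by ring] at h
  calc besselH ν x = _ := tsum_congr hterm
    _ = (ν + 1) * besselH (ν + 1) x + x * -besselH (ν + 2) x := h.tsum_eq
    _ = _ := by ring

end Series

section Zeros

variable {ν a b : ℝ}

theorem besselH_pos_of_lt (hν : 0 ≤ ν) (ha : a ∈ lowerBounds {x | 0 < x ∧ besselH ν x = 0})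
    {x : ℝ} (hx₀ : 0 ≤ x) (hxa : x < a) : 0 < besselH ν x := by
  have h0 : 0 < besselH ν 0 := by
    rw [besselH_zero]
    positivity
  by_contra! hx
  obtain ⟨y, ⟨hy₀, hyx⟩, hy⟩ :=
    intermediate_value_Ioc' hx₀ (continuous_besselH hν).continuousOn ⟨hx, h0⟩
  exact (ha ⟨hy₀, hy⟩).not_gt (hyx.trans_lt hxa)

theorem hasDerivAt_rpow_mul_besselH (hν : 0 ≤ ν) {x : ℝ} (hx : 0 ≤ x) :
    HasDerivAt (fun y ↦ y ^ (ν + 1) * besselH (ν + 1) y) (x ^ ν * besselH ν x) x := by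
  have hpow := hasDerivAt_rpow_const (x := x) (p := ν + 1) (Or.inr (by linarith))
  refine (hpow.mul (hasDerivAt_besselH (by linarith : 0 ≤ ν + 1) x)).congr_deriv ?_
  rw [besselH_eq_sub hν x, add_sub_cancel_right, rpow_add' hx (by linarith : 0 < ν + 1).ne',
    rpow_one, show ν + 1 + 1 = ν + 2 by ring]
  ring

theorem le_of_besselH_add_one_eq_zero (hν : 0 ≤ ν)
    (ha : a ∈ lowerBounds {x | 0 < x ∧ besselH ν x = 0}) (hb₀ : 0 < b)
    (hb : besselH (ν + 1) b = 0) : a ≤ b := by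
  by_contra! hba
  have hends : (fun y ↦ y ^ (ν + 1) * besselH (ν + 1) y) 0 =
      (fun y ↦ y ^ (ν + 1) * besselH (ν + 1) y) b := by
    dsimp only
    rw [zero_rpow (by linarith : 0 < ν + 1).ne', zero_mul, hb, mul_zero]
  obtain ⟨c, ⟨hc₀, hcb⟩, hc⟩ := exists_hasDerivAt_eq_zero hb₀
    (fun x hx ↦ (hasDerivAt_rpow_mul_besselH hν hx.1).continuousAt.continuousWithinAt) hends
    (fun x hx ↦ hasDerivAt_rpow_mul_besselH hν hx.1.le)
  exact (mul_pos (rpow_pos_of_pos hc₀ ν) (besselH_pos_of_lt hν ha hc₀.le (hcb.trans hba))).ne' hc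

theorem besselH_nonpos_of_mem_Icc (hν : 0 ≤ ν) (ha₀ : 0 < a) (ha : besselH ν a = 0)
    (hb : b ∈ lowerBounds {x | 0 < x ∧ besselH (ν + 1) x = 0}) {x : ℝ} (hx : x ∈ Icc a b) :
    besselH ν x ≤ 0 := by
  have hanti : AntitoneOn (besselH ν) (Icc 0 b) :=
    antitoneOn_of_deriv_nonpos (convex_Icc 0 b) (continuous_besselH hν).continuousOn
      (fun x _ ↦ (hasDerivAt_besselH hν x).differentiableAt.differentiableWithinAt) fun x hx ↦ by
        rw [interior_Icc] at hx
        rw [(hasDerivAt_besselH hν x).deriv, neg_nonpos]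
        exact (besselH_pos_of_lt (by linarith) hb hx.1.le hx.2).le
  calc besselH ν x ≤ besselH ν a := hanti ⟨ha₀.le, hx.1.trans hx.2⟩ ⟨ha₀.le.trans hx.1, hx.2⟩ hx.1
    _ = 0 := ha

theorem monotoneOn_besselH_sub_one (hν : 1 ≤ ν) (ha₀ : 0 < a) (ha : besselH ν a = 0)
    (hb : b ∈ lowerBounds {x | 0 < x ∧ besselH (ν + 1) x = 0}) :
    MonotoneOn (besselH (ν - 1)) (Icc a b) := by
  have hderiv (x : ℝ) : HasDerivAt (besselH (ν - 1)) (-besselH ν x) x := by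
    simpa using hasDerivAt_besselH (sub_nonneg.2 hν) x
  refine monotoneOn_of_deriv_nonneg (convex_Icc a b)
    (continuous_besselH (sub_nonneg.2 hν)).continuousOn
    (fun x _ ↦ (hderiv x).differentiableAt.differentiableWithinAt) fun x hx ↦ ?_
  rw [interior_Icc] at hx
  rw [(hderiv x).deriv, neg_nonneg]
  exact besselH_nonpos_of_mem_Icc (by linarith) ha₀ ha hb (Ioo_subset_Icc_self hx)

theorem Gamma_mul_besselH_sub_one_le (hν : 1 ≤ ν)
    (ha : IsLeast {x | 0 < x ∧ besselH ν x = 0} a)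
    (hb : IsLeast {x | 0 < x ∧ besselH (ν + 1) x = 0} b) :
    Gamma ν * besselH (ν - 1) a ≤ Gamma (ν + 1) * besselH ν b := by
  have hab : a ≤ b := le_of_besselH_add_one_eq_zero (by linarith) ha.2 hb.1.1 hb.1.2
  have hrec : besselH (ν - 1) b = ν * besselH ν b := by
    have h := besselH_eq_sub (sub_nonneg.2 hν) b
    rwa [sub_add_cancel, show ν - 1 + 2 = ν + 1 by ring, hb.1.2, mul_zero, sub_zero] at h
  calc Gamma ν * besselH (ν - 1) a ≤ Gamma ν * besselH (ν - 1) b :=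
        mul_le_mul_of_nonneg_left
          (monotoneOn_besselH_sub_one hν ha.1.1 ha.1.2 hb.2 ⟨le_rfl, hab⟩ ⟨hab, le_rfl⟩ hab)
          (by positivity)
    _ = Gamma (ν + 1) * besselH ν b := by
        rw [hrec, Gamma_add_one (by linarith : 0 < ν).ne']
        ring

end Zeros

theorem rpow_mul_besselJ (ν : ℝ) {t : ℝ} (ht : 0 < t) :
    (2 / t) ^ ν * besselJ ν t = besselH ν (t ^ 2 / 4) := by
  have ht₂ : 0 < t / 2 := by positivity
  have hterm (m : ℕ) : (-1 : ℝ) ^ m / (m ! * Gamma (m + ν + 1)) * (t / 2) ^ (2 * (m : ℝ) + ν) =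
      (t / 2) ^ ν * (besselCoeff ν m * (t ^ 2 / 4) ^ m) := by
    rw [rpow_add ht₂, rpow_mul ht₂.le, rpow_two, rpow_natCast, besselCoeff]
    ring
  rw [besselJ, tsum_congr hterm, tsum_mul_left, besselH, ← mul_assoc,
    ← mul_rpow (by positivity) ht₂.le, show 2 / t * (t / 2) = 1 by field_simp, one_rpow, one_mul]

theorem besselJ_eq_zero_iff {ν t : ℝ} (ht : 0 < t) :
    besselJ ν t = 0 ↔ besselH ν (t ^ 2 / 4) = 0 := by
  rw [← rpow_mul_besselJ ν ht, mul_eq_zero, or_iff_right (rpow_pos_of_pos (by positivity) ν).ne']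

theorem isLeast_besselH_zero {ν j : ℝ} (hj : IsLeast {t | 0 < t ∧ besselJ ν t = 0} j) :
    IsLeast {x | 0 < x ∧ besselH ν x = 0} (j ^ 2 / 4) := by
  obtain ⟨⟨hj₀, hjJ⟩, hjmin⟩ := hj
  refine ⟨⟨by positivity, (besselJ_eq_zero_iff hj₀).1 hjJ⟩, fun x ⟨hx₀, hx⟩ ↦ ?_⟩
  have ht₀ : 0 < 2 * √x := mul_pos two_pos (sqrt_pos.2 hx₀)
  have hsq : (2 * √x) ^ 2 / 4 = x := by
    rw [mul_pow, sq_sqrt hx₀.le]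
    ring
  have hjt : j ≤ 2 * √x := hjmin ⟨ht₀, (besselJ_eq_zero_iff ht₀).2 (by rwa [hsq])⟩
  calc j ^ 2 / 4 ≤ (2 * √x) ^ 2 / 4 := by gcongr
    _ = x := hsq

end Bessel

/-- for every `α ≥ 1`, writing `Ω_α(t) = Γ(α+1)·(2/t)^α·J_α(t)`,
the global minimum `Ω_α(j_{α+1})` of `Ω_α` is at least the global minimum
`Ω_{α-1}(j_α)` of `Ω_{α-1}`, where `j_ν` denotes the smallest positive zero of
the Bessel function `J_ν`. -/
theorem bessel_omega_min_monotone
    (α : ℝ) (hα : 1 ≤ α) (ja jb : ℝ)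
    (hja : IsLeast {t : ℝ | 0 < t ∧ besselJ α t = 0} ja)
    (hjb : IsLeast {t : ℝ | 0 < t ∧ besselJ (α + 1) t = 0} jb) :
    Real.Gamma α * (2 / ja) ^ (α - 1) * besselJ (α - 1) ja ≤
      Real.Gamma (α + 1) * (2 / jb) ^ α * besselJ α jb := by
  rw [mul_assoc, mul_assoc, Bessel.rpow_mul_besselJ _ hja.1.1, Bessel.rpow_mul_besselJ _ hjb.1.1]
  exact Bessel.Gamma_mul_besselH_sub_one_le hα (Bessel.isLeast_besselH_zero hja)
    (Bessel.isLeast_besselH_zero hjb)
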